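/- For the pair of k-state DFAs A and B over {0,1} from the tightness construction, the string 0^{k-1}1^{k-1} is accepted by exactly one of A and B. -/
import Mathlib


/-- The automaton A from the tightness construction: states `0, …, k-1`
(representing the paper's states `1, …, k`), state `0` the only non-accepting
state; on symbol `0` move up (capped at the top state), on symbol `1` move
down (floored at `0`), except that A stays at the top state on symbol `1`. -/
def tightA (n : ℕ) : DFA (Fin 2) (Fin (n + 2)) where
  step := fun i a =>
    if a = 0 then ⟨min (i.val + 1) (n + 1), by omega⟩
    else if i.val = n + 1 then i
    else ⟨i.val - 1, by omega⟩
  start := ⟨0, by omega⟩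
  accept := {s | s.val ≠ 0}

/-- The automaton B: identical to A except that on symbol `1` the top state
goes down to the state below it. -/
def tightB (n : ℕ) : DFA (Fin 2) (Fin (n + 2)) where
  step := fun i a =>
    if a = 0 then ⟨min (i.val + 1) (n + 1), by omega⟩
    else if i.val = n + 1 then ⟨n, by omega⟩
    else ⟨i.val - 1, by omega⟩
  start := ⟨0, by omega⟩
  accept := {s | s.val ≠ 0}


lemma dfa_evalFrom_cons {α σ} (M : DFA α σ) (s : σ) (a : α) (l : List α) :
    M.evalFrom s (a :: l) = M.evalFrom (M.step s a) l := rfl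

lemma dfa_evalFrom_append {α σ} (M : DFA α σ) (s : σ) (x y : List α) :
    M.evalFrom s (x ++ y) = M.evalFrom (M.evalFrom s x) y := by
  simp [DFA.evalFrom, List.foldl_append]

lemma tightA_zeros (n m : ℕ) (i : Fin (n + 2)) :
    (tightA n).evalFrom i (List.replicate m 0) = ⟨min (i.val + m) (n + 1), by omega⟩ := by
  induction m generalizing i with
  | zero =>
    simp only [List.replicate, DFA.evalFrom_nil]
    have := i.isLt
    exact Fin.ext (by simp; omega)
  | succ m ih =>
    rw [List.replicate_succ, dfa_evalFrom_cons, ih]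
    simp only [tightA, if_pos rfl]
    exact Fin.ext (by simp; omega)

lemma tightB_zeros (n m : ℕ) (i : Fin (n + 2)) :
    (tightB n).evalFrom i (List.replicate m 0) = ⟨min (i.val + m) (n + 1), by omega⟩ := by
  induction m generalizing i with
  | zero =>
    simp only [List.replicate, DFA.evalFrom_nil]
    have := i.isLt
    exact Fin.ext (by simp; omega)
  | succ m ih =>
    rw [List.replicate_succ, dfa_evalFrom_cons, ih]
    simp only [tightB, if_pos rfl]
    exact Fin.ext (by simp; omega)

lemma tightA_ones_top (n m : ℕ) :
    (tightA n).evalFrom ⟨n + 1, by omega⟩ (List.replicate m 1) = ⟨n + 1, by omega⟩ := by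
  induction m with
  | zero => simp
  | succ m ih =>
    rw [List.replicate_succ, dfa_evalFrom_cons]
    have hstep : (tightA n).step ⟨n + 1, by omega⟩ 1 = ⟨n + 1, by omega⟩ := by
      simp [tightA]
    rw [hstep, ih]

lemma tightB_ones (n m : ℕ) (i : Fin (n + 2)) :
    (tightB n).evalFrom i (List.replicate m 1) = ⟨i.val - m, by omega⟩ := by
  induction m generalizing i with
  | zero => simp
  | succ m ih =>
    rw [List.replicate_succ, dfa_evalFrom_cons, ih]
    have hst : ((tightB n).step i 1).val = i.val - 1 := by
      show (if (1 : Fin 2) = 0 then (⟨min (i.val + 1) (n + 1), by omega⟩ : Fin (n+2))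
        else if i.val = n + 1 then ⟨n, by omega⟩
        else ⟨i.val - 1, by omega⟩).val = i.val - 1
      rw [if_neg (by decide)]
      split_ifs with h <;> simp [h]
    exact Fin.ext (by simp [hst]; omega)

/-- With `k = n + 2`, the string `0^{k-1} 1^{k-1}` is accepted by exactly one
of A and B. -/
theorem stmt_17 (n : ℕ) :
    Xor' (List.replicate (n + 1) (0 : Fin 2) ++ List.replicate (n + 1) (1 : Fin 2)
            ∈ (tightA n).accepts)
         (List.replicate (n + 1) (0 : Fin 2) ++ List.replicate (n + 1) (1 : Fin 2)
            ∈ (tightB n).accepts) := by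
  have hA : List.replicate (n + 1) (0 : Fin 2) ++ List.replicate (n + 1) (1 : Fin 2)
      ∈ (tightA n).accepts := by
    rw [DFA.mem_accepts, DFA.eval, dfa_evalFrom_append, tightA_zeros]
    have h0 : ((tightA n).start : Fin (n+2)) = ⟨0, by omega⟩ := rfl
    simp only [show (tightA n).start.val = 0 from rfl]
    have : (⟨min (0 + (n + 1)) (n + 1), by omega⟩ : Fin (n+2)) = ⟨n+1, by omega⟩ :=
      Fin.ext (by simp)
    rw [this, tightA_ones_top]
    simp [tightA]
  have hB : List.replicate (n + 1) (0 : Fin 2) ++ List.replicate (n + 1) (1 : Fin 2)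
      ∉ (tightB n).accepts := by
    rw [DFA.mem_accepts, DFA.eval, dfa_evalFrom_append, tightB_zeros, tightB_ones]
    simp only [show (tightB n).start.val = 0 from rfl]
    simp only [tightB, Set.mem_setOf_eq, ne_eq, not_not]
    simp
  exact Or.inl ⟨hA, hB⟩
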